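/- Asymptotic normalization for the probabilistic Call-by-Value λ-calculus: for every multi-distribution m, the set Lim(m,⇒) = { p : m ⇒⇓ p } has a greatest element ⟦m⟧, and for every subdistribution p over NF, m ⇉E⇓ p if and only if p = ⟦m⟧; in particular every ⇉E-sequence from m has limit ⟦m⟧, i.e. ⇉E is an asymptotically normalizing strategy for ⇒ with respect to obsN. -/

import Mathlib

/-- Terms of the probabilistic Call-by-Value λ-calculus `Λ⊕`, in de Bruijn
representation: `M ::= x | λx.M | M M | M ⊕ M`. -/
inductive PTm : Type
  | var : ℕ → PTm
  | lam : PTm → PTm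
  | app : PTm → PTm → PTm
  | oplus : PTm → PTm → PTm
deriving DecidableEq

namespace PTm

/-- Lift (shift by one) the free variables of index `≥ d`. -/
def lift (d : ℕ) : PTm → PTm
  | var n => if n < d then var n else var (n + 1)
  | lam M => lam (lift (d + 1) M)
  | app M N => app (lift d M) (lift d N)
  | oplus M N => oplus (lift d M) (lift d N)

/-- Capture-avoiding substitution `M[N/k]`. -/
def subst : PTm → ℕ → PTm → PTm
  | var n, k, N => if n = k then N else if k < n then var (n - 1) else var n
  | lam M, k, N => lam (subst M (k + 1) (lift 0 N))
  | app M₁ M₂, k, N => app (subst M₁ k N) (subst M₂ k N)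
  | oplus M₁ M₂, k, N => oplus (subst M₁ k N) (subst M₂ k N)

end PTm

/-- Values: variables and abstractions. -/
inductive IsValue : PTm → Prop
  | var (n : ℕ) : IsValue (PTm.var n)
  | lam (M : PTm) : IsValue (PTm.lam M)

/-- Full βv-reduction on terms: closure of `(λx.M)V ↦βv M[V/x]` (`V` a value) under
arbitrary contexts `C ::= ⟨⟩ | λx.C | C M | M C | C ⊕ M | M ⊕ C`. -/
inductive FullBv : PTm → PTm → Prop
  | beta {M V} : IsValue V → FullBv (PTm.app (PTm.lam M) V) (M.subst 0 V)
  | lam {M M'} : FullBv M M' → FullBv (PTm.lam M) (PTm.lam M')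
  | appL {M M' N} : FullBv M M' → FullBv (PTm.app M N) (PTm.app M' N)
  | appR {M N N'} : FullBv N N' → FullBv (PTm.app M N) (PTm.app M N')
  | oplusL {M M' N} : FullBv M M' → FullBv (PTm.oplus M N) (PTm.oplus M' N)
  | oplusR {M N N'} : FullBv N N' → FullBv (PTm.oplus M N) (PTm.oplus M N')

/-- Weak βv-reduction: closure of `↦βv` under weak contexts `W ::= ⟨⟩ | W M | M W`. -/
inductive WeakBv : PTm → PTm → Prop
  | beta {M V} : IsValue V → WeakBv (PTm.app (PTm.lam M) V) (M.subst 0 V)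
  | appL {M M' N} : WeakBv M M' → WeakBv (PTm.app M N) (PTm.app M' N)
  | appR {M N N'} : WeakBv N N' → WeakBv (PTm.app M N) (PTm.app M N')

/-- `OplusRed M M₁ M₂` : `M = W⟨P ⊕ Q⟩` for a weak context `W`, with branches
`M₁ = W⟨P⟩` and `M₂ = W⟨Q⟩`. -/
inductive OplusRed : PTm → PTm → PTm → Prop
  | root (M N : PTm) : OplusRed (PTm.oplus M N) M N
  | appL {P P₁ P₂ Q} : OplusRed P P₁ P₂ →
      OplusRed (PTm.app P Q) (PTm.app P₁ Q) (PTm.app P₂ Q)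
  | appR {P Q Q₁ Q₂} : OplusRed Q Q₁ Q₂ →
      OplusRed (PTm.app P Q) (PTm.app P Q₁) (PTm.app P Q₂)

/-- Multi-distributions: finite multisets of pairs `(p, M)`. -/
abbrev MDist := Multiset (NNReal × PTm)

/-- The multi-distribution `[1 M]`. -/
def single (M : PTm) : MDist := {((1 : NNReal), M)}

/-- A multi-distribution proper: all probabilities are in `(0,1]` and their sum is `≤ 1`. -/
def IsMDist (m : MDist) : Prop :=
  (∀ q ∈ m, 0 < q.1 ∧ q.1 ≤ 1) ∧ (m.map Prod.fst).sum ≤ 1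

/-- One-step reduction `→ := →βv ∪ →⊕` from terms to multi-distributions:
`C⟨(λx.M)V⟩ →βv [C⟨M[V/x]⟩]` and `W⟨M ⊕ N⟩ →⊕ [½ W⟨M⟩, ½ W⟨N⟩]`. -/
inductive Step : PTm → MDist → Prop
  | bv {M M'} : FullBv M M' → Step M (single M')
  | oplus {M M₁ M₂} : OplusRed M M₁ M₂ →
      Step M {((1 : NNReal) / 2, M₁), ((1 : NNReal) / 2, M₂)}

/-- Surface reduction `→s`: weak βv-steps together with all `→⊕`-steps. -/
inductive SStep : PTm → MDist → Prop
  | bv {M M'} : WeakBv M M' → SStep M (single M')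
  | oplus {M M₁ M₂} : OplusRed M M₁ M₂ →
      SStep M {((1 : NNReal) / 2, M₁), ((1 : NNReal) / 2, M₂)}

/-- A term is normal if it has no `→`-step. -/
def TmNormal (M : PTm) : Prop := ∀ m, ¬ Step M m

/-- A term is surface-normal if it has no `→s`-step. -/
def SurfNormal (M : PTm) : Prop := ∀ m, ¬ SStep M m

/-- The unbiased βv-strategy `⊳βv` on `Λ⊕`: weak βv-steps as long as there are any;
once the term has no weak βv-redex, iterate in the subterms. -/
inductive UnbBv : PTm → PTm → Prop
  | weak {M M'} : WeakBv M M' → UnbBv M M'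
  | lam {P P'} : (∀ s, ¬ WeakBv (PTm.lam P) s) → UnbBv P P' →
      UnbBv (PTm.lam P) (PTm.lam P')
  | appL {P P' Q} : (∀ s, ¬ WeakBv (PTm.app P Q) s) → UnbBv P P' →
      UnbBv (PTm.app P Q) (PTm.app P' Q)
  | appR {P Q Q'} : (∀ s, ¬ WeakBv (PTm.app P Q) s) → UnbBv Q Q' →
      UnbBv (PTm.app P Q) (PTm.app P Q')
  | oplusL {P P' Q} : (∀ s, ¬ WeakBv (PTm.oplus P Q) s) → UnbBv P P' →
      UnbBv (PTm.oplus P Q) (PTm.oplus P' Q)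
  | oplusR {P Q Q'} : (∀ s, ¬ WeakBv (PTm.oplus P Q) s) → UnbBv Q Q' →
      UnbBv (PTm.oplus P Q) (PTm.oplus P Q')

/-- Unbiased evaluation `⊳E` from terms to multi-distributions: a surface step if the
term is not surface-normal; otherwise an unbiased βv-step. -/
inductive EStep : PTm → MDist → Prop
  | surf {M m} : ¬ SurfNormal M → SStep M m → EStep M m
  | unb {M M'} : SurfNormal M → UnbBv M M' → EStep M (single M')

/-- Internal steps `⋫E`: `→`-steps that are not `⊳E`-steps. -/
def IStep (M : PTm) (m : MDist) : Prop := Step M m ∧ ¬ EStep M m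

/-- Scalar multiplication `p • m` of a multi-distribution. -/
def scale (p : NNReal) (m : MDist) : MDist := m.map fun q => (p * q.1, q.2)

/-- Lifting of a relation `r` from terms to multi-distributions, to a relation on
multi-distributions: `[M] ⇒r [M]`; `[M] ⇒r m` whenever `M r m`; and
`[pᵢ Mᵢ]ᵢ ⇒r Σᵢ pᵢ·mᵢ` whenever `[Mᵢ] ⇒r mᵢ` for each `i`. -/
inductive Lift (r : PTm → MDist → Prop) : MDist → MDist → Prop
  | zero : Lift r 0 0
  | keep {p M m n} : Lift r m n → Lift r ((p, M) ::ₘ m) ((p, M) ::ₘ n)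
  | step {p M d m n} : r M d → Lift r m n → Lift r ((p, M) ::ₘ m) (scale p d + n)

/-- Full lifting of a relation `r` from terms to multi-distributions: as `Lift`, but a
component may stay put only if it is a normal form. -/
inductive FullLift (r : PTm → MDist → Prop) : MDist → MDist → Prop
  | zero : FullLift r 0 0
  | keep {p M m n} : TmNormal M → FullLift r m n →
      FullLift r ((p, M) ::ₘ m) ((p, M) ::ₘ n)
  | step {p M d m n} : r M d → FullLift r m n →
      FullLift r ((p, M) ::ₘ m) (scale p d + n)

open Classical in
/-- The observation `obsN`: the subdistribution over normal forms carried by a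
multi-distribution, `obsN(m)(N) = Σ { pᵢ : Mᵢ = N }` for `N` normal (and `0` on
non-normal terms). Subdistributions are ordered pointwise. -/
noncomputable def obsN (m : MDist) : PTm → NNReal := fun N =>
  if TmNormal N then ((m.filter fun q => q.2 = N).map Prod.fst).sum else 0

/-- A multi-distribution is `R`-normal if it has no `R`-successor. -/
def MNormal (R : MDist → MDist → Prop) (m : MDist) : Prop := ∀ n, ¬ R m n

/-- An `R`-sequence from `m`: at each step either an `R`-step is performed, or the
current multi-distribution is `R`-normal and the sequence stays constant. -/
def MSeq (R : MDist → MDist → Prop) (m : MDist) (f : ℕ → MDist) : Prop :=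
  f 0 = m ∧ ∀ i, R (f i) (f (i + 1)) ∨ (MNormal R (f i) ∧ f (i + 1) = f i)

/-- `m R⇓ p` : some `R`-sequence from `m` has limit (supremum of the pointwise-ordered
subdistributions `obsN (f i)`) equal to `p`. -/
def MConv (R : MDist → MDist → Prop) (m : MDist) (p : PTm → NNReal) : Prop :=
  ∃ f : ℕ → MDist, MSeq R m f ∧ IsLUB (Set.range fun i => obsN (f i)) p

/-!
Full βv-reduction is confluent, since parallel reduction has the diamond property, and every
parallel step factors as weak steps followed by an internal step. Hence a term with a βv-normal
form `N` weakly reduces to a weak-normal term with the outer shape of `N`, and by induction on `N`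
the strategy `⊳βv` terminates on it (uniform normalization).

The standard value of `M` towards a normal form `N` is the supremum of the probabilities with
which standard reduction trees (surface steps anywhere, deep βv-steps only on surface-normal
terms) reach `N`. Parallel steps can be absorbed into standard trees, so the standard value does
not increase along `→`, and it dominates `obsN`. Conversely, a `⇉E`-sequence follows any standard
tree: its surface steps transport the tree to a strictly smaller one, and on surface-normal terms
uniform normalization takes it to `N`. So every observation reachable by `⇒` is bounded by the
limit of every `⇉E`-sequence; hence all `⇉E`-sequences from `m` have the same limit, and it is the
greatest element of `Lim(m, ⇒)`.
-/

open scoped ENNReal NNReal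

/-! ### de Bruijn substitution -/

namespace PTm

lemma lift_lift (t : PTm) {i j : ℕ} (hij : i ≤ j) :
    lift i (lift j t) = lift (j + 1) (lift i t) := by
  induction t generalizing i j with
  | var n => simp only [lift]; split_ifs <;> simp only [lift] <;> split_ifs <;> grind
  | lam M ih => simp [lift, ih (Nat.succ_le_succ hij)]
  | app M N ihM ihN => simp [lift, ihM hij, ihN hij]
  | oplus M N ihM ihN => simp [lift, ihM hij, ihN hij]

lemma lift_subst (t : PTm) {d k : ℕ} (N : PTm) (hdk : d ≤ k) :
    lift d (subst t k N) = subst (lift d t) (k + 1) (lift d N) := by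
  induction t generalizing d k N with
  | var n => simp only [subst, lift]; split_ifs <;> simp only [lift, subst] <;> split_ifs <;> grind
  | lam M ih => simp [subst, lift, ih (lift 0 N) (Nat.succ_le_succ hdk), lift_lift N d.zero_le]
  | app M₁ M₂ ih₁ ih₂ => simp [subst, lift, ih₁ N hdk, ih₂ N hdk]
  | oplus M₁ M₂ ih₁ ih₂ => simp [subst, lift, ih₁ N hdk, ih₂ N hdk]

lemma lift_subst_of_le (t : PTm) {d k : ℕ} (N : PTm) (hkd : k ≤ d) :
    lift d (subst t k N) = subst (lift (d + 1) t) k (lift d N) := by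
  induction t generalizing d k N with
  | var n => simp only [subst, lift]; split_ifs <;> simp only [lift, subst] <;> split_ifs <;> grind
  | lam M ih => simp [subst, lift, ih (lift 0 N) (Nat.succ_le_succ hkd), lift_lift N d.zero_le]
  | app M₁ M₂ ih₁ ih₂ => simp [subst, lift, ih₁ N hkd, ih₂ N hkd]
  | oplus M₁ M₂ ih₁ ih₂ => simp [subst, lift, ih₁ N hkd, ih₂ N hkd]

@[simp] lemma subst_lift (t : PTm) (k : ℕ) (N : PTm) : subst (lift k t) k N = t := by
  induction t generalizing k N with
  | var n => simp only [lift]; split_ifs <;> simp only [subst] <;> split_ifs <;> grind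
  | lam M ih => simp [subst, lift, ih]
  | app M₁ M₂ ih₁ ih₂ => simp [subst, lift, ih₁, ih₂]
  | oplus M₁ M₂ ih₁ ih₂ => simp [subst, lift, ih₁, ih₂]

lemma subst_subst (t : PTm) {i j : ℕ} (u v : PTm) (hij : i ≤ j) :
    (t.subst i u).subst j v = (t.subst (j + 1) (lift i v)).subst i (u.subst j v) := by
  induction t generalizing i j u v with
  | var n =>
    simp only [subst]; split_ifs <;> simp only [subst, subst_lift] <;> (try split_ifs) <;> grind
  | lam M ih =>
    simp [subst, ih (lift 0 u) (lift 0 v) (Nat.succ_le_succ hij), lift_lift v i.zero_le,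
      lift_subst u v j.zero_le]
  | app M₁ M₂ ih₁ ih₂ => simp [subst, ih₁ u v hij, ih₂ u v hij]
  | oplus M₁ M₂ ih₁ ih₂ => simp [subst, ih₁ u v hij, ih₂ u v hij]

end PTm

lemma IsValue.lift {V : PTm} (h : IsValue V) (d : ℕ) : IsValue (V.lift d) := by
  cases h with
  | var n => by_cases h : n < d <;> simp [PTm.lift, h] <;> constructor
  | lam M => exact .lam _

lemma IsValue.subst {V N : PTm} (h : IsValue V) (k : ℕ) (hN : IsValue N) :
    IsValue (V.subst k N) := by
  cases h with
  | var n => simp only [PTm.subst]; split_ifs <;> first | exact hN | constructor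
  | lam M => exact .lam _

open PTm

/-! ### Normal forms and surface steps -/

def WeakNormal (M : PTm) : Prop := ∀ M', ¬ WeakBv M M'

def OplusNormal (M : PTm) : Prop := ∀ M₁ M₂, ¬ OplusRed M M₁ M₂

def BvNormal (M : PTm) : Prop := ∀ M', ¬ FullBv M M'

lemma IsValue.weakNormal {V : PTm} (h : IsValue V) : WeakNormal V := by
  cases h <;> rintro _ ⟨⟩

lemma IsValue.oplusNormal {V : PTm} (h : IsValue V) : OplusNormal V := by
  cases h <;> rintro _ _ ⟨⟩

lemma weakNormal_oplus (A B : PTm) : WeakNormal (oplus A B) := by rintro _ ⟨⟩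

lemma WeakBv.toFullBv {M M' : PTm} (h : WeakBv M M') : FullBv M M' := by
  induction h with
  | beta hv => exact .beta hv
  | appL _ ih => exact .appL ih
  | appR _ ih => exact .appR ih

lemma UnbBv.toFullBv {M M' : PTm} (h : UnbBv M M') : FullBv M M' := by
  induction h with
  | weak hw => exact hw.toFullBv
  | lam _ _ ih => exact .lam ih
  | appL _ _ ih => exact .appL ih
  | appR _ _ ih => exact .appR ih
  | oplusL _ _ ih => exact .oplusL ih
  | oplusR _ _ ih => exact .oplusR ih

lemma weakNormal_app_iff {P Q : PTm} :
    WeakNormal (app P Q) ↔ WeakNormal P ∧ WeakNormal Q ∧ ¬ ((∃ A, P = lam A) ∧ IsValue Q) := by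
  refine ⟨fun h => ⟨fun _ hs => h _ hs.appL, fun _ hs => h _ hs.appR, ?_⟩, ?_⟩
  · rintro ⟨⟨A, rfl⟩, hv⟩
    exact h _ (.beta hv)
  · rintro ⟨h1, h2, h3⟩ _ (hv | hw | hw)
    exacts [h3 ⟨⟨_, rfl⟩, hv⟩, h1 _ hw, h2 _ hw]

lemma oplusNormal_app_iff {P Q : PTm} :
    OplusNormal (app P Q) ↔ OplusNormal P ∧ OplusNormal Q := by
  refine ⟨fun h => ⟨fun _ _ h' => h _ _ h'.appL, fun _ _ h' => h _ _ h'.appR⟩, ?_⟩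
  rintro ⟨h1, h2⟩ _ _ (_ | hh | hh)
  exacts [h1 _ _ hh, h2 _ _ hh]

lemma surfNormal_iff {M : PTm} : SurfNormal M ↔ WeakNormal M ∧ OplusNormal M := by
  refine ⟨fun h => ⟨fun _ hs => h _ (.bv hs), fun _ _ ho => h _ (.oplus ho)⟩, ?_⟩
  rintro ⟨h1, h2⟩ _ (hw | ho)
  exacts [h1 _ hw, h2 _ _ ho]

lemma tmNormal_iff {M : PTm} : TmNormal M ↔ BvNormal M ∧ OplusNormal M := by
  refine ⟨fun h => ⟨fun _ hs => h _ (.bv hs), fun _ _ ho => h _ (.oplus ho)⟩, ?_⟩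
  rintro ⟨h1, h2⟩ _ (hb | ho)
  exacts [h1 _ hb, h2 _ _ ho]

lemma SurfNormal.weakNormal {M : PTm} (h : SurfNormal M) : WeakNormal M :=
  (surfNormal_iff.1 h).1

lemma SurfNormal.oplusNormal {M : PTm} (h : SurfNormal M) : OplusNormal M :=
  (surfNormal_iff.1 h).2

lemma surfNormal_lam (M : PTm) : SurfNormal (lam M) := by rintro _ (⟨⟨⟩⟩ | ⟨⟨⟩⟩)

lemma surfNormal_var (n : ℕ) : SurfNormal (var n) := by rintro _ (⟨⟨⟩⟩ | ⟨⟨⟩⟩)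

lemma not_surfNormal_oplus (A B : PTm) : ¬ SurfNormal (oplus A B) :=
  fun h => h _ (.oplus (.root A B))

lemma surfNormal_app_iff {P Q : PTm} :
    SurfNormal (app P Q) ↔
      SurfNormal P ∧ SurfNormal Q ∧ ¬ ((∃ A, P = lam A) ∧ IsValue Q) := by
  simp only [surfNormal_iff, weakNormal_app_iff, oplusNormal_app_iff]
  tauto

lemma TmNormal.bvNormal {M : PTm} (h : TmNormal M) : BvNormal M := (tmNormal_iff.1 h).1

lemma TmNormal.surfNormal {M : PTm} (h : TmNormal M) : SurfNormal M :=
  surfNormal_iff.2 ⟨fun _ hs => h.bvNormal _ hs.toFullBv, (tmNormal_iff.1 h).2⟩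

lemma FullBv.reflect_shape {M M' : PTm} (hn : WeakNormal M) (h : FullBv M M') :
    ((∃ B, M' = PTm.lam B) → ∃ B, M = PTm.lam B) ∧ (IsValue M' → IsValue M) := by
  cases h with
  | beta hv => exact absurd (.beta hv) (hn _)
  | lam h => exact ⟨fun _ => ⟨_, rfl⟩, fun _ => .lam _⟩
  | appL h | appR h | oplusL h | oplusR h => exact ⟨by rintro ⟨_, ⟨⟩⟩, by rintro ⟨⟩⟩

lemma WeakNormal.fullBv {M M' : PTm} (hn : WeakNormal M) (h : FullBv M M') :
    WeakNormal M' := by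
  induction h with
  | beta hv => exact absurd (.beta hv) (hn _)
  | lam => exact (IsValue.lam _).weakNormal
  | appL h ih =>
    obtain ⟨hP, hQ, hPQ⟩ := weakNormal_app_iff.1 hn
    exact weakNormal_app_iff.2
      ⟨ih hP, hQ, fun ⟨hl, hv⟩ => hPQ ⟨(h.reflect_shape hP).1 hl, hv⟩⟩
  | appR h ih =>
    obtain ⟨hP, hQ, hPQ⟩ := weakNormal_app_iff.1 hn
    exact weakNormal_app_iff.2
      ⟨hP, ih hQ, fun ⟨hl, hv⟩ => hPQ ⟨hl, (h.reflect_shape hQ).2 hv⟩⟩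
  | oplusL | oplusR => exact weakNormal_oplus _ _

lemma SurfNormal.fullBv {M M' : PTm} (hn : SurfNormal M) (h : FullBv M M') :
    SurfNormal M' := by
  induction h with
  | beta hv => exact absurd (.beta hv) (hn.weakNormal _)
  | lam => exact surfNormal_lam _
  | appL h ih =>
    obtain ⟨hP, hQ, hPQ⟩ := surfNormal_app_iff.1 hn
    exact surfNormal_app_iff.2
      ⟨ih hP, hQ, fun ⟨hl, hv⟩ => hPQ ⟨(h.reflect_shape hP.weakNormal).1 hl, hv⟩⟩
  | appR h ih =>
    obtain ⟨hP, hQ, hPQ⟩ := surfNormal_app_iff.1 hn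
    exact surfNormal_app_iff.2
      ⟨hP, ih hQ, fun ⟨hl, hv⟩ => hPQ ⟨hl, (h.reflect_shape hQ.weakNormal).2 hv⟩⟩
  | oplusL | oplusR => exact absurd hn (not_surfNormal_oplus _ _)

lemma WeakBv.diamond {M A B : PTm} (h1 : WeakBv M A) (h2 : WeakBv M B) :
    A = B ∨ ∃ C, WeakBv A C ∧ WeakBv B C := by
  induction h1 generalizing B with
  | beta hv =>
    rcases h2 with _ | ⟨⟨⟩⟩ | hw
    exacts [.inl rfl, absurd hw (hv.weakNormal _)]
  | appL h ih =>
    rcases h2 with _ | hw | hw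
    · cases h
    · rcases ih hw with rfl | ⟨C, hC1, hC2⟩
      exacts [.inl rfl, .inr ⟨_, hC1.appL, hC2.appL⟩]
    · exact .inr ⟨_, hw.appR, h.appL⟩
  | appR h ih =>
    rcases h2 with hv | hw | hw
    · exact absurd h (hv.weakNormal _)
    · exact .inr ⟨_, hw.appL, h.appR⟩
    · rcases ih hw with rfl | ⟨C, hC1, hC2⟩
      exacts [.inl rfl, .inr ⟨_, hC1.appR, hC2.appR⟩]

lemma WeakBv.commute_oplusRed {M P M₁ M₂ : PTm} (hw : WeakBv M P) (ho : OplusRed M M₁ M₂) :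
    ∃ P₁ P₂, OplusRed P P₁ P₂ ∧ WeakBv M₁ P₁ ∧ WeakBv M₂ P₂ := by
  induction hw generalizing M₁ M₂ with
  | beta hv =>
    rcases ho with _ | ⟨⟨⟩⟩ | hh
    exact absurd hh (hv.oplusNormal _ _)
  | appL h ih =>
    rcases ho with _ | hh | hh
    · obtain ⟨P₁, P₂, h1, h2, h3⟩ := ih hh
      exact ⟨_, _, h1.appL, h2.appL, h3.appL⟩
    · exact ⟨_, _, hh.appR, h.appL, h.appL⟩
  | appR h ih =>
    rcases ho with _ | hh | hh
    · exact ⟨_, _, hh.appL, h.appR, h.appR⟩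
    · obtain ⟨P₁, P₂, h1, h2, h3⟩ := ih hh
      exact ⟨_, _, h1.appR, h2.appR, h3.appR⟩

lemma OplusRed.eq_or_commute {M A₁ A₂ B₁ B₂ : PTm}
    (h1 : OplusRed M A₁ A₂) (h2 : OplusRed M B₁ B₂) :
    (A₁ = B₁ ∧ A₂ = B₂) ∨
    ∃ C₁₁ C₁₂ C₂₁ C₂₂, OplusRed A₁ C₁₁ C₁₂ ∧ OplusRed A₂ C₂₁ C₂₂ ∧
      OplusRed B₁ C₁₁ C₂₁ ∧ OplusRed B₂ C₁₂ C₂₂ := by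
  induction h1 generalizing B₁ B₂ with
  | root => rcases h2 with _ | ⟨⟨⟩⟩ | ⟨⟨⟩⟩; exact .inl ⟨rfl, rfl⟩
  | appL h ih =>
    rcases h2 with _ | hh | hh
    · rcases ih hh with ⟨rfl, rfl⟩ | ⟨_, _, _, _, u₁, u₂, u₃, u₄⟩
      exacts [.inl ⟨rfl, rfl⟩, .inr ⟨_, _, _, _, u₁.appL, u₂.appL, u₃.appL, u₄.appL⟩]
    · exact .inr ⟨_, _, _, _, hh.appR, hh.appR, h.appL, h.appL⟩
  | appR h ih =>
    rcases h2 with _ | hh | hh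
    · exact .inr ⟨_, _, _, _, hh.appL, hh.appL, h.appR, h.appR⟩
    · rcases ih hh with ⟨rfl, rfl⟩ | ⟨_, _, _, _, u₁, u₂, u₃, u₄⟩
      exacts [.inl ⟨rfl, rfl⟩, .inr ⟨_, _, _, _, u₁.appR, u₂.appR, u₃.appR, u₄.appR⟩]

lemma UnbBv.exists_of_fullBv {M M' : PTm} (h : FullBv M M') : ∃ X, UnbBv M X := by
  induction h with
  | beta hv => exact ⟨_, .weak (.beta hv)⟩
  | lam _ ih => exact ⟨_, .lam (IsValue.lam _).weakNormal ih.choose_spec⟩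
  | @appL P _ Q _ ih =>
    by_cases hw : WeakNormal (app P Q)
    · exact ⟨_, .appL hw ih.choose_spec⟩
    · exact ⟨_, .weak (not_forall_not.1 hw).choose_spec⟩
  | @appR P Q _ _ ih =>
    by_cases hw : WeakNormal (app P Q)
    · exact ⟨_, .appR hw ih.choose_spec⟩
    · exact ⟨_, .weak (not_forall_not.1 hw).choose_spec⟩
  | oplusL _ ih => exact ⟨_, .oplusL (weakNormal_oplus _ _) ih.choose_spec⟩
  | oplusR _ ih => exact ⟨_, .oplusR (weakNormal_oplus _ _) ih.choose_spec⟩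

lemma EStep.exists_of_not_tmNormal {M : PTm} (h : ¬ TmNormal M) : ∃ e, EStep M e := by
  obtain ⟨d, hd⟩ := not_forall_not.1 h
  by_cases hs : SurfNormal M
  · rcases hd with hb | ho
    · exact ⟨_, .unb hs (UnbBv.exists_of_fullBv hb).choose_spec⟩
    · exact absurd ho (hs.oplusNormal _ _)
  · obtain ⟨d, hd⟩ := not_forall_not.1 hs
    exact ⟨d, .surf hs hd⟩

lemma EStep.toStep {M : PTm} {e : MDist} (h : EStep M e) : Step M e := by
  rcases h with ⟨_, hw | ho⟩ | ⟨_, hu⟩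
  exacts [.bv hw.toFullBv, .oplus ho, .bv hu.toFullBv]

/-! ### Parallel reduction, confluence and weak-first factorization -/

inductive Par : PTm → PTm → Prop
  | var (n : ℕ) : Par (var n) (var n)
  | lam {B B'} : Par B B' → Par (lam B) (lam B')
  | app {P P' Q Q'} : Par P P' → Par Q Q' → Par (app P Q) (app P' Q')
  | oplus {A A' B B'} : Par A A' → Par B B' → Par (oplus A B) (oplus A' B')
  | beta {A A' V V'} : IsValue V → Par A A' → Par V V' →
      Par (app (lam A) V) (A'.subst 0 V')

@[refl] lemma Par.refl (M : PTm) : Par M M := by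
  induction M with
  | var n => exact .var n
  | lam B ih => exact .lam ih
  | app P Q ih₁ ih₂ => exact .app ih₁ ih₂
  | oplus A B ih₁ ih₂ => exact .oplus ih₁ ih₂

lemma FullBv.toPar {M M' : PTm} (h : FullBv M M') : Par M M' := by
  induction h with
  | beta hv => exact .beta hv (.refl _) (.refl _)
  | lam _ ih => exact .lam ih
  | appL _ ih => exact .app ih (.refl _)
  | appR _ ih => exact .app (.refl _) ih
  | oplusL _ ih => exact .oplus ih (.refl _)
  | oplusR _ ih => exact .oplus (.refl _) ih

lemma IsValue.par {V X : PTm} (hv : IsValue V) (h : Par V X) : IsValue X := by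
  rcases hv with _ | _ <;> rcases h <;> constructor

lemma Par.lift {M M' : PTm} (h : Par M M') (d : ℕ) : Par (M.lift d) (M'.lift d) := by
  induction h generalizing d with
  | var n => exact .refl _
  | lam _ ih => exact .lam (ih (d + 1))
  | app _ _ ih₁ ih₂ => exact .app (ih₁ d) (ih₂ d)
  | oplus _ _ ih₁ ih₂ => exact .oplus (ih₁ d) (ih₂ d)
  | beta hv _ _ ihA ihV =>
    rw [lift_subst_of_le _ _ d.zero_le]
    exact .beta (hv.lift d) (ihA (d + 1)) (ihV d)

lemma Par.subst {A A' : PTm} (h : Par A A') (k : ℕ) {N N' : PTm} (hv : IsValue N)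
    (hN : Par N N') : Par (A.subst k N) (A'.subst k N') := by
  induction h generalizing k N N' with
  | var n => simp only [PTm.subst]; split_ifs <;> first | exact hN | exact .refl _
  | lam _ ih => exact .lam (ih (k + 1) (hv.lift 0) (hN.lift 0))
  | app _ _ ih₁ ih₂ => exact .app (ih₁ k hv hN) (ih₂ k hv hN)
  | oplus _ _ ih₁ ih₂ => exact .oplus (ih₁ k hv hN) (ih₂ k hv hN)
  | beta hV _ _ ihA ihV =>
    rw [subst_subst _ _ _ k.zero_le]
    exact .beta (hV.subst k hv) (ihA (k + 1) (hv.lift 0) (hN.lift 0)) (ihV k hv hN)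

lemma Par.diamond {M A B : PTm} (h₁ : Par M A) (h₂ : Par M B) :
    ∃ C, Par A C ∧ Par B C := by
  induction h₁ generalizing B with
  | var n => cases h₂; exact ⟨_, .refl _, .refl _⟩
  | lam _ ih =>
    obtain _ | ⟨hB⟩ := h₂
    obtain ⟨C, hC₁, hC₂⟩ := ih hB
    exact ⟨_, .lam hC₁, .lam hC₂⟩
  | oplus _ _ ih₁ ih₂ =>
    obtain _ | _ | _ | ⟨hA, hB⟩ := h₂
    obtain ⟨C, hC₁, hC₂⟩ := ih₁ hA
    obtain ⟨D, hD₁, hD₂⟩ := ih₂ hB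
    exact ⟨_, .oplus hC₁ hD₁, .oplus hC₂ hD₂⟩
  | app hP hQ ihP ihQ =>
    cases h₂ with
    | app hP₂ hQ₂ =>
      obtain ⟨C, hC₁, hC₂⟩ := ihP hP₂
      obtain ⟨D, hD₁, hD₂⟩ := ihQ hQ₂
      exact ⟨_, .app hC₁ hD₁, .app hC₂ hD₂⟩
    | beta hv hA hV =>
      obtain _ | ⟨-⟩ := hP
      obtain ⟨C, hC₁, hC₂⟩ := ihP (.lam hA)
      obtain _ | ⟨hCA₁⟩ := hC₁
      obtain _ | ⟨hCA₂⟩ := hC₂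
      obtain ⟨D, hD₁, hD₂⟩ := ihQ hV
      exact ⟨_, .beta (hv.par hQ) hCA₁ hD₁, hCA₂.subst 0 (hv.par hV) hD₂⟩
  | beta hv _ hV ihA ihV =>
    cases h₂ with
    | app hP₂ hQ₂ =>
      obtain _ | ⟨hA₂⟩ := hP₂
      obtain ⟨C, hC₁, hC₂⟩ := ihA hA₂
      obtain ⟨D, hD₁, hD₂⟩ := ihV hQ₂
      exact ⟨_, hC₁.subst 0 (hv.par hV) hD₁, .beta (hv.par hQ₂) hC₂ hD₂⟩
    | beta _ hA₂ hV₂ =>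
      obtain ⟨C, hC₁, hC₂⟩ := ihA hA₂
      obtain ⟨D, hD₁, hD₂⟩ := ihV hV₂
      exact ⟨_, hC₁.subst 0 (hv.par hV) hD₁, hC₂.subst 0 (hv.par hV₂) hD₂⟩

abbrev BvStar := Relation.ReflTransGen FullBv

abbrev WeakStar := Relation.ReflTransGen WeakBv

lemma BvStar.lam {B B' : PTm} (h : BvStar B B') : BvStar (PTm.lam B) (PTm.lam B') :=
  Relation.ReflTransGen.lift PTm.lam (fun _ _ => FullBv.lam) _ _ h

lemma BvStar.app {P P' Q Q' : PTm} (hP : BvStar P P') (hQ : BvStar Q Q') :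
    BvStar (PTm.app P Q) (PTm.app P' Q') :=
  (Relation.ReflTransGen.lift (PTm.app · Q) (fun _ _ => FullBv.appL) _ _ hP).trans
    (Relation.ReflTransGen.lift (PTm.app P' ·) (fun _ _ => FullBv.appR) _ _ hQ)

lemma BvStar.oplus {A A' B B' : PTm} (hA : BvStar A A') (hB : BvStar B B') :
    BvStar (PTm.oplus A B) (PTm.oplus A' B') :=
  (Relation.ReflTransGen.lift (PTm.oplus · B) (fun _ _ => FullBv.oplusL) _ _ hA).trans
    (Relation.ReflTransGen.lift (PTm.oplus A' ·) (fun _ _ => FullBv.oplusR) _ _ hB)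

lemma WeakStar.app {P P' Q Q' : PTm} (hP : WeakStar P P') (hQ : WeakStar Q Q') :
    WeakStar (PTm.app P Q) (PTm.app P' Q') :=
  (Relation.ReflTransGen.lift (PTm.app · Q) (fun _ _ => WeakBv.appL) _ _ hP).trans
    (Relation.ReflTransGen.lift (PTm.app P' ·) (fun _ _ => WeakBv.appR) _ _ hQ)

lemma Par.toBvStar {M M' : PTm} (h : Par M M') : BvStar M M' := by
  induction h with
  | var n => rfl
  | lam _ ih => exact ih.lam
  | app _ _ ih₁ ih₂ => exact ih₁.app ih₂
  | oplus _ _ ih₁ ih₂ => exact ih₁.oplus ih₂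
  | beta hv _ hV ihA ihV => exact ((ihA.lam).app ihV).tail (.beta (hv.par hV))

lemma BvStar.confluent {M A B : PTm} (hA : BvStar M A) (hB : BvStar M B) :
    ∃ C, BvStar A C ∧ BvStar B C := by
  have toPar : BvStar ≤ Relation.ReflTransGen Par :=
    Relation.ReflTransGen.mono fun _ _ => FullBv.toPar
  have ofPar : Relation.ReflTransGen Par ≤ BvStar :=
    Relation.ReflTransGen.lift' id fun _ _ => Par.toBvStar
  obtain ⟨C, hAC, hBC⟩ := Relation.church_rosser (r := Par)
    (fun _ _ _ h₁ h₂ => (Par.diamond h₁ h₂).imp fun _ h => ⟨.single h.1, .single h.2⟩)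
    (toPar _ _ hA) (toPar _ _ hB)
  exact ⟨C, ofPar _ _ hAC, ofPar _ _ hBC⟩

lemma BvStar.eq_of_bvNormal {A C : PTm} (hA : BvNormal A) (h : BvStar A C) : C = A :=
  (Relation.reflTransGen_iff_eq hA).1 h

/-- Internal parallel reduction: a parallel step that contracts no redex at a weak position. -/
inductive ParInt : PTm → PTm → Prop
  | var (n : ℕ) : ParInt (var n) (var n)
  | lam {B B'} : Par B B' → ParInt (lam B) (lam B')
  | app {P P' Q Q'} : ParInt P P' → ParInt Q Q' → ParInt (app P Q) (app P' Q')
  | oplus {A A' B B'} : Par A A' → Par B B' → ParInt (oplus A B) (oplus A' B')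

lemma ParInt.toPar {M M' : PTm} (h : ParInt M M') : Par M M' := by
  induction h with
  | var n => exact .var n
  | lam h => exact .lam h
  | app _ _ ih₁ ih₂ => exact .app ih₁ ih₂
  | oplus h₁ h₂ => exact .oplus h₁ h₂

lemma ParInt.of_isValue {V V' : PTm} (hv : IsValue V) (h : Par V V') : ParInt V V' := by
  rcases hv with _ | _ <;> rcases h with _ | h
  exacts [.var _, .lam h]

lemma Par.isLam {P P' : PTm} (h : Par P P') (hP : ∃ A, P = PTm.lam A) : ∃ A', P' = PTm.lam A' := by
  obtain ⟨A, rfl⟩ := hP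
  rcases h with _ | _
  exact ⟨_, rfl⟩

lemma IsValue.of_parInt {V V' : PTm} (h : ParInt V V') (hv : IsValue V') : IsValue V := by
  rcases h with _ | _ | _ | _ <;> first | constructor | cases hv

lemma WeakNormal.of_parInt {M M' : PTm} (h : ParInt M M') (hn : WeakNormal M') :
    WeakNormal M := by
  induction h with
  | var n => exact (IsValue.var n).weakNormal
  | lam _ => exact (IsValue.lam _).weakNormal
  | app hP hQ ihP ihQ =>
    obtain ⟨hP', hQ', hPQ⟩ := weakNormal_app_iff.1 hn
    exact weakNormal_app_iff.2
      ⟨ihP hP', ihQ hQ', fun ⟨hl, hv⟩ => hPQ ⟨hP.toPar.isLam hl, hv.par hQ.toPar⟩⟩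
  | oplus _ _ => exact weakNormal_oplus _ _

lemma SurfNormal.of_parInt {M M' : PTm} (h : ParInt M M') (hn : SurfNormal M') :
    SurfNormal M := by
  induction h with
  | var n => exact surfNormal_var n
  | lam _ => exact surfNormal_lam _
  | app hP hQ ihP ihQ =>
    obtain ⟨hP', hQ', hPQ⟩ := surfNormal_app_iff.1 hn
    exact surfNormal_app_iff.2
      ⟨ihP hP', ihQ hQ', fun ⟨hl, hv⟩ => hPQ ⟨hP.toPar.isLam hl, hv.par hQ.toPar⟩⟩
  | oplus _ _ => exact absurd hn (not_surfNormal_oplus _ _)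

lemma ParInt.exists_weakBv {M M' P' : PTm} (hi : ParInt M M') (hw : WeakBv M' P') :
    ∃ P, WeakBv M P ∧ Par P P' := by
  induction hw generalizing M with
  | beta hv =>
    obtain _ | _ | ⟨_ | ⟨hA⟩, hV⟩ := hi
    have hV' := hv.of_parInt hV
    exact ⟨_, .beta hV', hA.subst 0 hV' hV.toPar⟩
  | appL _ ih =>
    obtain _ | _ | ⟨hP, hQ⟩ := hi
    obtain ⟨P, hw, hp⟩ := ih hP
    exact ⟨_, hw.appL, .app hp hQ.toPar⟩
  | appR _ ih =>
    obtain _ | _ | ⟨hP, hQ⟩ := hi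
    obtain ⟨Q, hw, hq⟩ := ih hQ
    exact ⟨_, hw.appR, .app hP.toPar hq⟩

lemma ParInt.exists_oplusRed {M M' P₁' P₂' : PTm} (hi : ParInt M M')
    (ho : OplusRed M' P₁' P₂') : ∃ P₁ P₂, OplusRed M P₁ P₂ ∧ Par P₁ P₁' ∧ Par P₂ P₂' := by
  induction ho generalizing M with
  | root =>
    obtain _ | _ | _ | ⟨h₁, h₂⟩ := hi
    exact ⟨_, _, .root _ _, h₁, h₂⟩
  | appL _ ih =>
    obtain _ | _ | ⟨hP, hQ⟩ := hi
    obtain ⟨P₁, P₂, ho, h₁, h₂⟩ := ih hP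
    exact ⟨_, _, ho.appL, .app h₁ hQ.toPar, .app h₂ hQ.toPar⟩
  | appR _ ih =>
    obtain _ | _ | ⟨hP, hQ⟩ := hi
    obtain ⟨Q₁, Q₂, ho, h₁, h₂⟩ := ih hQ
    exact ⟨_, _, ho.appR, .app hP.toPar h₁, .app hP.toPar h₂⟩

lemma WeakBv.subst {M M' : PTm} (h : WeakBv M M') (k : ℕ) {V : PTm} (hV : IsValue V) :
    WeakBv (M.subst k V) (M'.subst k V) := by
  induction h with
  | beta hW =>
    rw [subst_subst _ _ _ k.zero_le]
    exact .beta (hW.subst k hV)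
  | appL _ ih => exact ih.appL
  | appR _ ih => exact ih.appR

lemma ParInt.subst {M M' : PTm} (h : ParInt M M') (k : ℕ) {V V' : PTm} (hv : IsValue V)
    (hV : Par V V') : ParInt (M.subst k V) (M'.subst k V') := by
  induction h generalizing k with
  | var n => simp only [PTm.subst]; split_ifs <;> first | exact .of_isValue hv hV | exact .var _
  | lam h => exact .lam (h.subst (k + 1) (hv.lift 0) (hV.lift 0))
  | app _ _ ih₁ ih₂ => exact .app (ih₁ k) (ih₂ k)
  | oplus h₁ h₂ => exact .oplus (h₁.subst k hv hV) (h₂.subst k hv hV)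

lemma Par.exists_weakStar_parInt {M M' : PTm} (h : Par M M') :
    ∃ M₀, WeakStar M M₀ ∧ ParInt M₀ M' := by
  induction h with
  | var n => exact ⟨_, .refl, .var n⟩
  | lam h => exact ⟨_, .refl, .lam h⟩
  | app _ _ ihP ihQ =>
    obtain ⟨P₀, hwP, hiP⟩ := ihP
    obtain ⟨Q₀, hwQ, hiQ⟩ := ihQ
    exact ⟨_, hwP.app hwQ, .app hiP hiQ⟩
  | oplus h₁ h₂ => exact ⟨_, .refl, .oplus h₁ h₂⟩
  | @beta A _ V _ hv _ hV ihA =>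
    obtain ⟨A₀, hw, hi⟩ := ihA
    have hw' : WeakStar (A.subst 0 V) (A₀.subst 0 V) :=
      Relation.ReflTransGen.lift (·.subst 0 V) (fun _ _ h => h.subst 0 hv) _ _ hw
    exact ⟨_, .head (.beta hv) hw', hi.subst 0 hv hV⟩

/-! ### Uniform normalization of `⊳βv` -/

def UnbTerminates (M : PTm) : Prop := Acc (fun M' M => UnbBv M M') M

lemma UnbBv.weakBv_of_weakBv {M X Y : PTm} (hX : WeakBv M X) (hY : UnbBv M Y) : WeakBv M Y := by
  rcases hY with hY | ⟨hn⟩ | ⟨hn⟩ | ⟨hn⟩ | ⟨hn⟩ | ⟨hn⟩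
  · exact hY
  all_goals exact absurd hX (hn _)

lemma UnbTerminates.of_weakBv {M X : PTm} (hX : UnbTerminates X) (h : WeakBv M X) :
    UnbTerminates M := by
  induction hX generalizing M with
  | intro X hX ih =>
    refine ⟨M, fun Y hY => ?_⟩
    rcases h.diamond (UnbBv.weakBv_of_weakBv h hY) with rfl | ⟨C, hXC, hYC⟩
    · exact ⟨X, hX⟩
    · exact ih C (.weak hXC) hYC

lemma UnbTerminates.of_weakStar {M K : PTm} (hK : UnbTerminates K) (h : WeakStar M K) :
    UnbTerminates M := by
  induction h using Relation.ReflTransGen.head_induction_on with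
  | refl => exact hK
  | head hMX _ ih => exact ih.of_weakBv hMX

lemma Par.exists_weakNormal_factor {M M' K' : PTm} (hp : Par M M') (hw : WeakStar M' K')
    (hK' : WeakNormal K') : ∃ K, WeakStar M K ∧ WeakNormal K ∧ Par K K' := by
  induction hw using Relation.ReflTransGen.head_induction_on generalizing M with
  | refl =>
    obtain ⟨M₀, hw, hi⟩ := hp.exists_weakStar_parInt
    exact ⟨M₀, hw, .of_parInt hi hK', hi.toPar⟩
  | head hM'X _ ih =>
    obtain ⟨M₀, hw, hi⟩ := hp.exists_weakStar_parInt
    obtain ⟨Y, hM₀Y, hYX⟩ := hi.exists_weakBv hM'X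
    obtain ⟨K, hYK, hK, hKK'⟩ := ih hYX
    exact ⟨K, hw.trans (.head hM₀Y hYK), hK, hKK'⟩

lemma BvStar.exists_weakNormal_factor {M N : PTm} (h : BvStar M N) (hN : WeakNormal N) :
    ∃ K, WeakStar M K ∧ WeakNormal K ∧ BvStar K N := by
  induction h using Relation.ReflTransGen.head_induction_on with
  | refl => exact ⟨_, .refl, hN, .refl⟩
  | head hMM₁ _ ih =>
    obtain ⟨K₁, hM₁K₁, hK₁, hK₁N⟩ := ih
    obtain ⟨K, hMK, hK, hKK₁⟩ := hMM₁.toPar.exists_weakNormal_factor hM₁K₁ hK₁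
    exact ⟨K, hMK, hK, hKK₁.toBvStar.trans hK₁N⟩

lemma WeakNormal.bvStar {M M' : PTm} (hn : WeakNormal M) (h : BvStar M M') : WeakNormal M' := by
  induction h with
  | refl => exact hn
  | tail _ h ih => exact ih.fullBv h

lemma BvStar.lam_inv {B N : PTm} (h : BvStar (PTm.lam B) N) :
    ∃ B', N = PTm.lam B' ∧ BvStar B B' := by
  induction h with
  | refl => exact ⟨B, rfl, .refl⟩
  | tail _ hlast ih =>
    obtain ⟨B', rfl, hB⟩ := ih
    obtain _ | h := hlast
    exact ⟨_, rfl, hB.tail h⟩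

lemma BvStar.oplus_inv {A B N : PTm} (h : BvStar (PTm.oplus A B) N) :
    ∃ A' B', N = PTm.oplus A' B' ∧ BvStar A A' ∧ BvStar B B' := by
  induction h with
  | refl => exact ⟨A, B, rfl, .refl, .refl⟩
  | tail _ hlast ih =>
    obtain ⟨A', B', rfl, hA, hB⟩ := ih
    rcases hlast with _ | _ | _ | _ | h | h
    exacts [⟨_, _, rfl, hA.tail h, hB⟩, ⟨_, _, rfl, hA, hB.tail h⟩]

lemma BvStar.app_inv {P Q N : PTm} (hn : WeakNormal (PTm.app P Q)) (h : BvStar (PTm.app P Q) N) :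
    ∃ P' Q', N = PTm.app P' Q' ∧ BvStar P P' ∧ BvStar Q Q' := by
  induction h with
  | refl => exact ⟨P, Q, rfl, .refl, .refl⟩
  | tail hprev hlast ih =>
    obtain ⟨P', Q', rfl, hP, hQ⟩ := ih
    rcases hlast with hv | _ | h | h
    · exact absurd (.beta hv) (hn.bvStar hprev _)
    exacts [⟨_, _, rfl, hP.tail h, hQ⟩, ⟨_, _, rfl, hP, hQ.tail h⟩]

lemma UnbTerminates.var (n : ℕ) : UnbTerminates (var n) :=
  ⟨_, fun _ h => by rcases h with ⟨⟨⟩⟩⟩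

lemma UnbTerminates.lam {B : PTm} (h : UnbTerminates B) : UnbTerminates (lam B) := by
  induction h with
  | intro B _ ih => exact ⟨_, fun _ h => by rcases h with ⟨⟨⟩⟩ | ⟨_, h⟩; exact ih _ h⟩

lemma UnbTerminates.oplus {A B : PTm} (hA : UnbTerminates A) (hB : UnbTerminates B) :
    UnbTerminates (oplus A B) := by
  induction hA generalizing B with
  | intro A hA ihA =>
    induction hB with
    | intro B _ ihB =>
      refine ⟨_, fun _ h => ?_⟩
      rcases h with ⟨⟨⟩⟩ | _ | _ | _ | ⟨_, h⟩ | ⟨_, h⟩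
      exacts [ihA _ h ⟨B, ‹_›⟩, ihB _ h]

lemma UnbTerminates.app {P Q : PTm} (hP : UnbTerminates P) (hQ : UnbTerminates Q)
    (hn : WeakNormal (app P Q)) : UnbTerminates (app P Q) := by
  induction hP generalizing Q with
  | intro P hP ihP =>
    induction hQ with
    | intro Q hQ ihQ =>
      refine ⟨_, fun _ h => ?_⟩
      rcases h with hw | _ | ⟨_, h⟩ | ⟨_, h⟩
      · exact absurd hw (hn _)
      · exact ihP _ h ⟨Q, hQ⟩ (hn.fullBv (.appL h.toFullBv))
      · exact ihQ _ h (hn.fullBv (.appR h.toFullBv))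

/-- Reduce weakly to a weak-normal `K` first; `K` has the outer shape of `N`, so the argument
recurses into the components. -/
lemma UnbTerminates.of_bvStar {M N : PTm} (hN : BvNormal N) (h : BvStar M N) :
    UnbTerminates M := by
  obtain ⟨K, hMK, hK, hKN⟩ := h.exists_weakNormal_factor fun _ h => hN _ h.toFullBv
  refine UnbTerminates.of_weakStar ?_ hMK
  cases K with
  | var n => exact .var n
  | lam B =>
    obtain ⟨B', rfl, hB⟩ := BvStar.lam_inv hKN
    exact (of_bvStar (fun _ h => hN _ (.lam h)) hB).lam
  | app P Q =>
    obtain ⟨P', Q', rfl, hP, hQ⟩ := BvStar.app_inv hK hKN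
    exact .app (of_bvStar (fun _ h => hN _ (.appL h)) hP)
      (of_bvStar (fun _ h => hN _ (.appR h)) hQ) hK
  | oplus A B =>
    obtain ⟨A', B', rfl, hA, hB⟩ := BvStar.oplus_inv hKN
    exact .oplus (of_bvStar (fun _ h => hN _ (.oplusL h)) hA)
      (of_bvStar (fun _ h => hN _ (.oplusR h)) hB)
termination_by sizeOf N

/-! ### Standard trees -/

/-- `StdTree N n M s`: a finite standard reduction tree of size `n` from `M` whose leaves equal
to `N` carry total probability `s`. Surface steps may be fired anywhere, deep βv-steps only on
surface-normal terms, and `zero` prunes a branch. -/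
inductive StdTree (N : PTm) : ℕ → PTm → ℝ≥0 → Prop
  | zero (M : PTm) : StdTree N 0 M 0
  | base : StdTree N 0 N 1
  | weak {n M M' s} : WeakBv M M' → StdTree N n M' s → StdTree N (n + 1) M s
  | oplus {n₁ n₂ M M₁ M₂ s₁ s₂} : OplusRed M M₁ M₂ → StdTree N n₁ M₁ s₁ →
      StdTree N n₂ M₂ s₂ → StdTree N (n₁ + n₂ + 1) M (s₁ / 2 + s₂ / 2)
  | deep {n M M' s} : SurfNormal M → FullBv M M' → StdTree N n M' s → StdTree N (n + 1) M s

lemma ne_zero_or_ne_zero_of_half_add_half_ne_zero {s₁ s₂ : ℝ≥0} (h : s₁ / 2 + s₂ / 2 ≠ 0) :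
    s₁ ≠ 0 ∨ s₂ ≠ 0 := by
  contrapose! h
  simp [h]

namespace StdTree

variable {N : PTm}

lemma le_one {n : ℕ} {M : PTm} {s : ℝ≥0} (h : StdTree N n M s) : s ≤ 1 := by
  induction h with
  | zero => exact zero_le_one
  | base => exact le_rfl
  | weak _ _ ih | deep _ _ _ ih => exact ih
  | oplus _ _ _ ih₁ ih₂ =>
    calc _ ≤ (1 : ℝ≥0) / 2 + 1 / 2 := by gcongr
      _ = 1 := add_halves 1

lemma weakBv (hN : TmNormal N) {n : ℕ} {M P : PTm} {s : ℝ≥0} (hT : StdTree N n M s)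
    (hw : WeakBv M P) :
    ∃ n' s', StdTree N n' P s' ∧ s ≤ s' ∧ n' ≤ n ∧ (s ≠ 0 → n' < n) := by
  induction n using Nat.strong_induction_on generalizing M P s with
  | _ n ih =>
  cases hT with
  | zero => exact ⟨0, 0, .zero P, le_rfl, le_rfl, fun h => absurd rfl h⟩
  | base => exact absurd (.bv hw.toFullBv) (hN _)
  | @weak n₁ _ _ _ hw' T =>
    rcases hw'.diamond hw with rfl | ⟨C, hC₁, hC₂⟩
    · exact ⟨n₁, s, T, le_rfl, n₁.le_succ, fun _ => n₁.lt_succ_self⟩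
    · obtain ⟨a, s', T', hs, ha, hstr⟩ := ih n₁ n₁.lt_succ_self T hC₁
      exact ⟨a + 1, s', .weak hC₂ T', hs, by omega, fun h => by have := hstr h; omega⟩
  | @oplus n₁ n₂ _ _ _ s₁ s₂ ho T₁ T₂ =>
    obtain ⟨P₁, P₂, ho', hw₁, hw₂⟩ := hw.commute_oplusRed ho
    obtain ⟨a₁, s₁', U₁, hs₁, ha₁, hst₁⟩ := ih n₁ (by omega) T₁ hw₁
    obtain ⟨a₂, s₂', U₂, hs₂, ha₂, hst₂⟩ := ih n₂ (by omega) T₂ hw₂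
    refine ⟨a₁ + a₂ + 1, _, .oplus ho' U₁ U₂, by gcongr, by omega, fun hs0 => ?_⟩
    rcases ne_zero_or_ne_zero_of_half_add_half_ne_zero hs0 with h | h
    · have := hst₁ h; omega
    · have := hst₂ h; omega
  | deep hsn _ _ => exact absurd hw (hsn.weakNormal _)

lemma oplusRed (hN : TmNormal N) {n : ℕ} {M P Q : PTm} {s : ℝ≥0} (hT : StdTree N n M s)
    (ho : OplusRed M P Q) :
    ∃ a b s₁ s₂, StdTree N a P s₁ ∧ StdTree N b Q s₂ ∧ s ≤ s₁ / 2 + s₂ / 2 ∧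
      a ≤ n ∧ b ≤ n ∧ (s ≠ 0 → a < n ∧ b < n) := by
  induction n using Nat.strong_induction_on generalizing M P Q s with
  | _ n ih =>
  cases hT with
  | zero => exact ⟨0, 0, 0, 0, .zero P, .zero Q, by simp, le_rfl, le_rfl, fun h => absurd rfl h⟩
  | base => exact absurd (.oplus ho) (hN _)
  | @weak n₁ _ _ _ hw T =>
    obtain ⟨X₁, X₂, ho', hw₁, hw₂⟩ := hw.commute_oplusRed ho
    obtain ⟨a, b, s₁, s₂, U₁, U₂, hs, ha, hb, hst⟩ := ih n₁ n₁.lt_succ_self T ho'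
    exact ⟨a + 1, b + 1, s₁, s₂, .weak hw₁ U₁, .weak hw₂ U₂, hs, by omega, by omega,
      fun h => by have := hst h; omega⟩
  | @oplus n₁ n₂ _ _ _ s₁ s₂ ho' T₁ T₂ =>
    rcases ho'.eq_or_commute ho with ⟨rfl, rfl⟩ | ⟨_, _, _, _, u₁, u₂, u₃, u₄⟩
    · exact ⟨n₁, n₂, s₁, s₂, T₁, T₂, le_rfl, by omega, by omega, fun _ => by omega⟩
    obtain ⟨a₁, b₁, t₁, r₁, A₁, B₁, hs₁, ha₁, hb₁, hst₁⟩ := ih n₁ (by omega) T₁ u₁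
    obtain ⟨a₂, b₂, t₂, r₂, A₂, B₂, hs₂, ha₂, hb₂, hst₂⟩ := ih n₂ (by omega) T₂ u₂
    refine ⟨a₁ + a₂ + 1, b₁ + b₂ + 1, _, _, .oplus u₃ A₁ A₂, .oplus u₄ B₁ B₂, ?_,
      by omega, by omega, fun hs0 => ?_⟩
    · calc s₁ / 2 + s₂ / 2 ≤ (t₁ / 2 + r₁ / 2) / 2 + (t₂ / 2 + r₂ / 2) / 2 := by gcongr
        _ = (t₁ / 2 + t₂ / 2) / 2 + (r₁ / 2 + r₂ / 2) / 2 := by ring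
    · rcases ne_zero_or_ne_zero_of_half_add_half_ne_zero hs0 with h | h
      · have := hst₁ h; omega
      · have := hst₂ h; omega
  | deep hsn _ _ => exact absurd (.oplus ho) (hsn _)

lemma of_weakStar {M M₀ : PTm} (h : WeakStar M M₀) {n : ℕ} {s : ℝ≥0}
    (hT : StdTree N n M₀ s) : ∃ n', StdTree N n' M s := by
  induction h using Relation.ReflTransGen.head_induction_on with
  | refl => exact ⟨n, hT⟩
  | head h _ ih =>
    obtain ⟨a, hA⟩ := ih
    exact ⟨a + 1, .weak h hA⟩

lemma of_bvStar_of_surfNormal {M M' : PTm} (hsn : SurfNormal M) (h : BvStar M M')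
    {n : ℕ} {s : ℝ≥0} (hT : StdTree N n M' s) : ∃ n', StdTree N n' M s := by
  induction h using Relation.ReflTransGen.head_induction_on with
  | refl => exact ⟨n, hT⟩
  | head h _ ih =>
    obtain ⟨a, hA⟩ := ih (hsn.fullBv h)
    exact ⟨a + 1, .deep hsn h hA⟩

/-- Split the parallel step into weak steps and an internal step, and push the internal step
past the root of the tree. -/
lemma of_par (hN : TmNormal N) {n : ℕ} {M M' : PTm} {s : ℝ≥0} (hp : Par M M')
    (hT : StdTree N n M' s) : ∃ n', StdTree N n' M s := by
  induction n using Nat.strong_induction_on generalizing M M' s with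
  | _ n ih =>
  by_cases hsn : SurfNormal M
  · exact of_bvStar_of_surfNormal hsn hp.toBvStar hT
  obtain ⟨M₀, hw, hi⟩ := hp.exists_weakStar_parInt
  suffices ∃ n', StdTree N n' M₀ s from this.elim fun _ hT' => of_weakStar hw hT'
  cases hT with
  | zero => exact ⟨0, .zero M₀⟩
  | base => exact of_bvStar_of_surfNormal (.of_parInt hi hN.surfNormal) hi.toPar.toBvStar .base
  | deep hs' hf T =>
    exact of_bvStar_of_surfNormal (.of_parInt hi hs') hi.toPar.toBvStar (.deep hs' hf T)
  | @weak n₀ _ _ _ hw' T =>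
    obtain ⟨Y, hY₁, hY₂⟩ := hi.exists_weakBv hw'
    obtain ⟨a, hA⟩ := ih n₀ n₀.lt_succ_self hY₂ T
    exact ⟨_, .weak hY₁ hA⟩
  | @oplus n₁ n₂ _ _ _ _ _ ho T₁ T₂ =>
    obtain ⟨Q₁, Q₂, ho', hq₁, hq₂⟩ := hi.exists_oplusRed ho
    obtain ⟨a, hA⟩ := ih n₁ (by omega) hq₁ T₁
    obtain ⟨b, hB⟩ := ih n₂ (by omega) hq₂ T₂
    exact ⟨_, .oplus ho' hA hB⟩

end StdTree

noncomputable def stdValue (N M : PTm) : ℝ≥0∞ :=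
  ⨆ t : {s : ℝ≥0 // ∃ n, StdTree N n M s}, (t.1 : ℝ≥0∞)

instance (N M : PTm) : Nonempty {s : ℝ≥0 // ∃ n, StdTree N n M s} := ⟨⟨0, 0, .zero M⟩⟩

lemma StdTree.le_stdValue {N M : PTm} {n : ℕ} {s : ℝ≥0} (h : StdTree N n M s) :
    (s : ℝ≥0∞) ≤ stdValue N M :=
  le_iSup (fun t : {s : ℝ≥0 // ∃ n, StdTree N n M s} => (t.1 : ℝ≥0∞)) ⟨s, n, h⟩

lemma one_le_stdValue_self (N : PTm) : 1 ≤ stdValue N N := by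
  exact_mod_cast StdTree.base.le_stdValue

lemma stdValue_le_of_fullBv {N M M' : PTm} (hN : TmNormal N) (h : FullBv M M') :
    stdValue N M' ≤ stdValue N M :=
  iSup_le fun ⟨_, _, hT⟩ => (hT.of_par hN h.toPar).elim fun _ hT' => hT'.le_stdValue

lemma stdValue_le_of_oplusRed {N M M₁ M₂ : PTm} (h : OplusRed M M₁ M₂) :
    stdValue N M₁ / 2 + stdValue N M₂ / 2 ≤ stdValue N M := by
  simp only [stdValue, ENNReal.iSup_div]
  refine ENNReal.iSup_add_iSup_le fun ⟨s₁, _, h₁⟩ ⟨s₂, _, h₂⟩ => ?_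
  calc (s₁ : ℝ≥0∞) / 2 + s₂ / 2 = ((s₁ / 2 + s₂ / 2 : ℝ≥0) : ℝ≥0∞) := by
        push_cast [ENNReal.coe_div two_ne_zero]; norm_num
    _ ≤ stdValue N M := (StdTree.oplus h h₁ h₂).le_stdValue

/-! ### Multi-distributions -/

@[simp] lemma scale_zero (p : ℝ≥0) : scale p 0 = 0 := rfl

@[simp] lemma scale_cons (p q : ℝ≥0) (M : PTm) (m : MDist) :
    scale p ((q, M) ::ₘ m) = (p * q, M) ::ₘ scale p m := by
  simp [scale]

lemma scale_single (p : ℝ≥0) (M : PTm) : scale p (single M) = {(p, M)} := by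
  simp [scale, single]

lemma scale_pair (p q : ℝ≥0) (M₁ M₂ : PTm) :
    scale p {(q, M₁), (q, M₂)} = {(p * q, M₁)} + {(p * q, M₂)} := by
  simp [scale, Multiset.insert_eq_cons, Multiset.singleton_add]

def mass (m : MDist) : ℝ≥0 := (m.map Prod.fst).sum

@[simp] lemma mass_cons (p : ℝ≥0) (M : PTm) (m : MDist) :
    mass ((p, M) ::ₘ m) = p + mass m := by simp [mass]

@[simp] lemma mass_add (a b : MDist) : mass (a + b) = mass a + mass b := by simp [mass]

@[simp] lemma mass_scale (p : ℝ≥0) (m : MDist) : mass (scale p m) = p * mass m := by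
  simp [mass, scale, Multiset.map_map, Multiset.sum_map_mul_left]

lemma Step.mass_eq_one {M : PTm} {d : MDist} (h : Step M d) : mass d = 1 := by
  rcases h with _ | _
  · simp [single, mass]
  · simp only [mass, Multiset.insert_eq_cons, Multiset.map_cons, Multiset.sum_cons]
    simpa using add_halves (1 : ℝ≥0)

lemma Lift.mass_eq {m n : MDist} (h : Lift Step m n) : mass n = mass m := by
  induction h with
  | zero => rfl
  | keep _ ih => simp [ih]
  | step hr _ ih => simp [ih, hr.mass_eq_one]

lemma mass_eq_of_reach {m n : MDist} (h : Relation.ReflTransGen (Lift Step) m n) :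
    mass n = mass m := by
  induction h with
  | refl => rfl
  | tail _ h ih => rw [h.mass_eq, ih]

lemma obsN_of_tmNormal {N : PTm} (hN : TmNormal N) (m : MDist) :
    obsN m N = ((m.filter fun q => q.2 = N).map Prod.fst).sum := if_pos hN

lemma obsN_of_not_tmNormal {N : PTm} (hN : ¬ TmNormal N) (m : MDist) : obsN m N = 0 :=
  if_neg hN

lemma obsN_cons (p : ℝ≥0) (M : PTm) (m : MDist) {N : PTm} (hN : TmNormal N) :
    obsN ((p, M) ::ₘ m) N = (if M = N then p else 0) + obsN m N := by
  rw [obsN_of_tmNormal hN, obsN_of_tmNormal hN, Multiset.filter_cons]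
  split_ifs <;> simp

lemma obsN_add (a b : MDist) (N : PTm) : obsN (a + b) N = obsN a N + obsN b N := by
  by_cases hN : TmNormal N
  · simp [obsN_of_tmNormal hN, Multiset.filter_add]
  · simp [obsN_of_not_tmNormal hN]

lemma obsN_singleton (p : ℝ≥0) {N : PTm} (hN : TmNormal N) : obsN {(p, N)} N = p := by
  simp [← Multiset.cons_zero, obsN_cons _ _ _ hN, obsN_of_tmNormal hN]

lemma obsN_le_mass (m : MDist) (N : PTm) : obsN m N ≤ mass m := by
  by_cases hN : TmNormal N
  · induction m using Multiset.induction_on with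
    | empty => simp [obsN_of_tmNormal hN]
    | cons q m ih =>
      rw [obsN_cons _ _ _ hN, mass_cons]
      gcongr
      split_ifs <;> simp
  · simp [obsN_of_not_tmNormal hN]

lemma Lift.obsN_le {m n : MDist} (h : Lift Step m n) (N : PTm) : obsN m N ≤ obsN n N := by
  by_cases hN : TmNormal N
  · induction h with
    | zero => exact le_rfl
    | keep _ ih => simpa [obsN_cons _ _ _ hN] using ih
    | @step p M d _ _ hr _ ih =>
      have hMN : M ≠ N := by rintro rfl; exact hN _ hr
      simpa [obsN_cons _ _ _ hN, obsN_add, hMN] using le_add_left ih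
  · simp [obsN_of_not_tmNormal hN]

lemma FullLift.toLift {r r' : PTm → MDist → Prop} (hr : ∀ M d, r M d → r' M d)
    {m n : MDist} (h : FullLift r m n) : Lift r' m n := by
  induction h with
  | zero => exact .zero
  | keep _ _ ih => exact .keep ih
  | step h _ ih => exact .step (hr _ _ h) ih

lemma FullLift.exists_eStep (m : MDist) : ∃ n, FullLift EStep m n := by
  induction m using Multiset.induction_on with
  | empty => exact ⟨0, .zero⟩
  | cons q m ih =>
    obtain ⟨n, hn⟩ := ih
    by_cases hM : TmNormal q.2
    · exact ⟨_, .keep hM hn⟩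
    · obtain ⟨e, he⟩ := EStep.exists_of_not_tmNormal hM
      exact ⟨_, .step he hn⟩

def FullLiftAt (r : PTm → MDist → Prop) (q : ℝ≥0 × PTm) (c : MDist) : Prop :=
  (TmNormal q.2 ∧ c = {q}) ∨ ∃ d, r q.2 d ∧ c = scale q.1 d

lemma fullLift_iff {r : PTm → MDist → Prop} {m c : MDist} :
    FullLift r m c ↔ ∃ cs, Multiset.Rel (FullLiftAt r) m cs ∧ c = cs.sum := by
  constructor
  · intro h
    induction h with
    | zero => exact ⟨0, .zero, rfl⟩
    | keep hM _ ih =>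
      obtain ⟨cs, hcs, rfl⟩ := ih
      exact ⟨_, .cons (.inl ⟨hM, rfl⟩) hcs, by simp [Multiset.singleton_add]⟩
    | step hd _ ih =>
      obtain ⟨cs, hcs, rfl⟩ := ih
      exact ⟨_, .cons (.inr ⟨_, hd, rfl⟩) hcs, by simp⟩
  · rintro ⟨cs, hcs, rfl⟩
    induction m using Multiset.induction_on generalizing cs with
    | empty => simp_all [FullLift.zero]
    | cons q m ih =>
      obtain ⟨c, cs', hq | ⟨d, hd, rfl⟩, hcs', rfl⟩ := Multiset.rel_cons_left.1 hcs
      · obtain ⟨hM, rfl⟩ := hq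
        simpa [Multiset.singleton_add] using FullLift.keep hM (ih _ hcs')
      · simpa using FullLift.step hd (ih _ hcs')

lemma FullLift.of_add {r : PTm → MDist → Prop} {a b c : MDist} (h : FullLift r (a + b) c) :
    ∃ ca cb, c = ca + cb ∧ FullLift r a ca ∧ FullLift r b cb := by
  obtain ⟨cs, hcs, rfl⟩ := fullLift_iff.1 h
  obtain ⟨cs₁, cs₂, h₁, h₂, rfl⟩ := Multiset.rel_add_left.1 hcs
  exact ⟨_, _, Multiset.sum_add _ _, fullLift_iff.2 ⟨_, h₁, rfl⟩, fullLift_iff.2 ⟨_, h₂, rfl⟩⟩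

lemma FullLift.singleton_inv {r : PTm → MDist → Prop} {q : ℝ≥0 × PTm} {c : MDist}
    (h : FullLift r {q} c) : FullLiftAt r q c := by
  obtain ⟨cs, hcs, rfl⟩ := fullLift_iff.1 h
  obtain ⟨c, cs', hc, hcs', rfl⟩ := Multiset.rel_cons_left.1 hcs
  simpa [Multiset.rel_zero_left.1 hcs'] using hc

/-! ### Evaluation sequences -/

def IsEvalSeq (f : ℕ → MDist) : Prop := ∀ i, FullLift EStep (f i) (f (i + 1))

noncomputable def limObs (f : ℕ → MDist) (N : PTm) : ℝ≥0∞ := ⨆ j, (obsN (f j) N : ℝ≥0∞)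

lemma le_limObs (f : ℕ → MDist) (j : ℕ) (N : PTm) : (obsN (f j) N : ℝ≥0∞) ≤ limObs f N :=
  le_iSup (fun j => (obsN (f j) N : ℝ≥0∞)) j

lemma limObs_tail_le (f : ℕ → MDist) (N : PTm) : limObs (fun j => f (j + 1)) N ≤ limObs f N :=
  iSup_le fun j => le_limObs f (j + 1) N

namespace IsEvalSeq

variable {f : ℕ → MDist}

lemma tail (h : IsEvalSeq f) : IsEvalSeq fun j => f (j + 1) := fun i => h (i + 1)

lemma liftStep (h : IsEvalSeq f) (i : ℕ) : Lift Step (f i) (f (i + 1)) :=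
  (h i).toLift fun _ _ => EStep.toStep

lemma reach (h : IsEvalSeq f) (j : ℕ) : Relation.ReflTransGen (Lift Step) (f 0) (f j) := by
  induction j with
  | zero => exact .refl
  | succ j ih => exact ih.tail (h.liftStep j)

lemma monotone_obsN (h : IsEvalSeq f) (N : PTm) : Monotone fun j => (obsN (f j) N : ℝ≥0∞) :=
  monotone_nat_of_le_succ fun j => by exact_mod_cast (h.liftStep j).obsN_le N

lemma split (h : IsEvalSeq f) {a b : MDist} (h0 : f 0 = a + b) :
    ∃ fa fb, IsEvalSeq fa ∧ fa 0 = a ∧ IsEvalSeq fb ∧ fb 0 = b ∧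
      ∀ N, limObs f N = limObs fa N + limObs fb N := by
  have step : ∀ j (x : MDist × MDist), f j = x.1 + x.2 → ∃ y : MDist × MDist,
      f (j + 1) = y.1 + y.2 ∧ FullLift EStep x.1 y.1 ∧ FullLift EStep x.2 y.2 := by
    intro j x hx
    obtain ⟨ca, cb, hc, ha, hb⟩ := FullLift.of_add (hx ▸ h j)
    exact ⟨(ca, cb), hc, ha, hb⟩
  choose! g hg using step
  let pair : ℕ → MDist × MDist := fun j => Nat.rec (a, b) (fun j x => g j x) j
  have hpair : ∀ j, f j = (pair j).1 + (pair j).2 := fun j => by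
    induction j with
    | zero => exact h0
    | succ j ih => exact (hg j _ ih).1
  have ha : IsEvalSeq fun j => (pair j).1 := fun j => (hg j _ (hpair j)).2.1
  have hb : IsEvalSeq fun j => (pair j).2 := fun j => (hg j _ (hpair j)).2.2
  refine ⟨_, _, ha, rfl, hb, rfl, fun N => ?_⟩
  rw [limObs, limObs, limObs, ENNReal.iSup_add_iSup_of_monotone (ha.monotone_obsN N)
    (hb.monotone_obsN N)]
  simp only [hpair, obsN_add, ENNReal.coe_add]

lemma first_step (h : IsEvalSeq f) {p : ℝ≥0} {M : PTm} (h0 : f 0 = {(p, M)})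
    (hM : ¬ TmNormal M) : ∃ d, EStep M d ∧ f 1 = scale p d := by
  have := (h0 ▸ h 0).singleton_inv
  rcases this with ⟨hn, -⟩ | hd
  exacts [absurd hn hM, hd]

end IsEvalSeq

lemma le_limObs_of_eq_singleton {f : ℕ → MDist} {j : ℕ} {p : ℝ≥0} {N : PTm}
    (hN : TmNormal N) (hj : f j = {(p, N)}) : (p : ℝ≥0∞) ≤ limObs f N := by
  simpa [hj, obsN_singleton p hN] using le_limObs f j N

/-- On a surface-normal term, `⊳E` only fires `⊳βv`-steps; by uniform normalization these reach
the βv-normal form. -/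
lemma IsEvalSeq.exists_eq_singleton_of_surfNormal {N M : PTm} (hN : BvNormal N)
    (hM : UnbTerminates M) (hsn : SurfNormal M) (hMN : BvStar M N) {p : ℝ≥0}
    {f : ℕ → MDist} (hf : IsEvalSeq f) (h0 : f 0 = {(p, M)}) : ∃ j, f j = {(p, N)} := by
  induction hM generalizing f with
  | intro M _ ih =>
  by_cases hnorm : TmNormal M
  · exact ⟨0, by rw [h0, hMN.eq_of_bvNormal hnorm.bvNormal]⟩
  obtain ⟨d, hd, h1⟩ := hf.first_step h0 hnorm
  rcases hd with ⟨hns, -⟩ | ⟨-, hu⟩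
  · exact absurd hsn hns
  obtain ⟨C, hM'C, hNC⟩ := BvStar.confluent (.single hu.toFullBv) hMN
  rw [hNC.eq_of_bvNormal hN] at hM'C
  obtain ⟨j, hj⟩ := ih _ hu (hsn.fullBv hu.toFullBv) hM'C hf.tail (h1.trans (scale_single _ _))
  exact ⟨j + 1, hj⟩

lemma StdTree.bvStar_of_surfNormal {N M : PTm} {n : ℕ} {s : ℝ≥0} (hT : StdTree N n M s)
    (hsn : SurfNormal M) (hs : s ≠ 0) : BvStar M N := by
  induction hT with
  | zero => exact absurd rfl hs
  | base => exact .refl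
  | weak hw => exact absurd hw (hsn.weakNormal _)
  | oplus ho => exact absurd (.oplus ho) (hsn _)
  | deep _ h _ ih => exact .head h (ih (hsn.fullBv h) hs)

lemma StdTree.le_limObs_of_surfNormal {N M : PTm} (hN : TmNormal N) {n : ℕ} {s : ℝ≥0}
    (hT : StdTree N n M s) (hs : s ≠ 0) (hsn : SurfNormal M) {p : ℝ≥0} {f : ℕ → MDist}
    (hf : IsEvalSeq f) (h0 : f 0 = {(p, M)}) : (p : ℝ≥0∞) ≤ limObs f N := by
  have hMN := hT.bvStar_of_surfNormal hsn hs
  obtain ⟨j, hj⟩ := hf.exists_eq_singleton_of_surfNormal hN.bvNormal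
    (.of_bvStar hN.bvNormal hMN) hsn hMN h0
  exact le_limObs_of_eq_singleton hN hj

/-- Evaluation follows the tree: each surface step transports it to a strictly smaller one. -/
lemma StdTree.le_limObs {N M : PTm} (hN : TmNormal N) {n : ℕ} {s : ℝ≥0}
    (hT : StdTree N n M s) {p : ℝ≥0} {f : ℕ → MDist} (hf : IsEvalSeq f)
    (h0 : f 0 = {(p, M)}) : (p : ℝ≥0∞) * s ≤ limObs f N := by
  induction n using Nat.strong_induction_on generalizing M s p f with
  | _ n ih =>
  rcases eq_or_ne s 0 with rfl | hs0
  · simp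
  by_cases hsn : SurfNormal M
  · calc (p : ℝ≥0∞) * s ≤ p := mul_le_of_le_one_right' (by exact_mod_cast hT.le_one)
      _ ≤ limObs f N := hT.le_limObs_of_surfNormal hN hs0 hsn hf h0
  obtain ⟨d, hd, h1⟩ := hf.first_step h0 fun h => hsn h.surfNormal
  refine le_trans ?_ (limObs_tail_le f N)
  rcases hd with ⟨-, hw | ho⟩ | ⟨hsn', -⟩
  · obtain ⟨n', s', T', hss', -, hlt⟩ := hT.weakBv hN hw
    calc (p : ℝ≥0∞) * s ≤ p * s' := by gcongr
      _ ≤ _ := ih n' (hlt hs0) T' hf.tail (h1.trans (scale_single _ _))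
  · obtain ⟨a, b, s₁, s₂, T₁, T₂, hs, -, -, hlt⟩ := hT.oplusRed hN ho
    obtain ⟨fa, fb, hfa, ha0, hfb, hb0, hsum⟩ := hf.tail.split (h1.trans (scale_pair _ _ _ _))
    have hle : p * s ≤ p * (1 / 2) * s₁ + p * (1 / 2) * s₂ :=
      calc p * s ≤ p * (s₁ / 2 + s₂ / 2) := by gcongr
        _ = _ := by ring
    calc (p : ℝ≥0∞) * s
        ≤ ((p * (1 / 2) : ℝ≥0) : ℝ≥0∞) * s₁ + ((p * (1 / 2) : ℝ≥0) : ℝ≥0∞) * s₂ := by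
          exact_mod_cast hle
      _ ≤ limObs fa N + limObs fb N :=
          add_le_add (ih a (hlt hs0).1 T₁ hfa ha0) (ih b (hlt hs0).2 T₂ hfb hb0)
      _ = _ := (hsum N).symm
  · exact absurd hsn' hsn

noncomputable def stdValueSum (N : PTm) (m : MDist) : ℝ≥0∞ :=
  (m.map fun q => (q.1 : ℝ≥0∞) * stdValue N q.2).sum

@[simp] lemma stdValueSum_zero (N : PTm) : stdValueSum N 0 = 0 := rfl

@[simp] lemma stdValueSum_cons (N : PTm) (p : ℝ≥0) (M : PTm) (m : MDist) :
    stdValueSum N ((p, M) ::ₘ m) = p * stdValue N M + stdValueSum N m := by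
  simp [stdValueSum]

@[simp] lemma stdValueSum_add (N : PTm) (a b : MDist) :
    stdValueSum N (a + b) = stdValueSum N a + stdValueSum N b := by
  simp [stdValueSum]

lemma obsN_le_stdValueSum {N : PTm} (hN : TmNormal N) (m : MDist) :
    (obsN m N : ℝ≥0∞) ≤ stdValueSum N m := by
  induction m using Multiset.induction_on with
  | empty => simp [obsN_of_tmNormal hN, stdValueSum]
  | cons q m ih =>
    rw [obsN_cons _ _ _ hN, stdValueSum_cons, ENNReal.coe_add]
    gcongr
    split_ifs with h
    · exact le_mul_of_one_le_right' (h ▸ one_le_stdValue_self N)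
    · simp

lemma Step.stdValueSum_scale_le {N M : PTm} (hN : TmNormal N) {d : MDist} (h : Step M d)
    (p : ℝ≥0) : stdValueSum N (scale p d) ≤ p * stdValue N M := by
  cases h with
  | bv h =>
    simpa [scale_single, ← Multiset.cons_zero] using
      mul_le_mul_right (stdValue_le_of_fullBv hN h) (p : ℝ≥0∞)
  | @oplus M₁ M₂ h =>
    calc stdValueSum N (scale p _) = p * (stdValue N M₁ / 2 + stdValue N M₂ / 2) := by
          simp [← Multiset.cons_zero, div_eq_mul_inv]; ring
      _ ≤ p * stdValue N M := by gcongr; exact stdValue_le_of_oplusRed h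

lemma Lift.stdValueSum_le {N : PTm} (hN : TmNormal N) {m n : MDist} (h : Lift Step m n) :
    stdValueSum N n ≤ stdValueSum N m := by
  induction h with
  | zero => exact le_rfl
  | keep _ ih => simpa using add_le_add_right ih _
  | step hr _ ih => simpa using add_le_add (hr.stdValueSum_scale_le hN _) ih

lemma stdValueSum_le_of_reach {N : PTm} (hN : TmNormal N) {m n : MDist}
    (h : Relation.ReflTransGen (Lift Step) m n) : stdValueSum N n ≤ stdValueSum N m := by
  induction h with
  | refl => exact le_rfl
  | tail _ h ih => exact (h.stdValueSum_le hN).trans ih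

lemma IsEvalSeq.stdValueSum_le_limObs {N : PTm} (hN : TmNormal N) {f : ℕ → MDist}
    (hf : IsEvalSeq f) : stdValueSum N (f 0) ≤ limObs f N := by
  induction h : f 0 using Multiset.induction_on generalizing f with
  | empty => simp [stdValueSum]
  | cons q m ih =>
    obtain ⟨fa, fb, hfa, ha0, hfb, hb0, hsum⟩ :=
      hf.split (h.trans (Multiset.singleton_add _ _).symm)
    rw [← Multiset.singleton_add, stdValueSum_add, hsum]
    refine add_le_add ?_ (ih hfb hb0)
    simp only [stdValueSum, Multiset.map_singleton, Multiset.sum_singleton, stdValue,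
      ENNReal.mul_iSup]
    exact iSup_le fun ⟨s, _, hT⟩ => hT.le_limObs hN hfa ha0

/-- `stdValueSum` sits in between: it dominates `obsN` and does not increase along `⇒`. -/
lemma IsEvalSeq.obsN_le_limObs {f : ℕ → MDist} (hf : IsEvalSeq f) {n : MDist}
    (hn : Relation.ReflTransGen (Lift Step) (f 0) n) (N : PTm) :
    (obsN n N : ℝ≥0∞) ≤ limObs f N := by
  by_cases hN : TmNormal N
  · calc (obsN n N : ℝ≥0∞) ≤ stdValueSum N n := obsN_le_stdValueSum hN n
      _ ≤ stdValueSum N (f 0) := stdValueSum_le_of_reach hN hn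
      _ ≤ limObs f N := hf.stdValueSum_le_limObs hN
  · simp [obsN_of_not_tmNormal hN]

/-! ### The limit `⟦m⟧` -/

lemma NNReal.isLUB_range_iff_coe_eq_iSup {ι : Type*} (y : ι → ℝ≥0) (q : ℝ≥0) :
    IsLUB (Set.range y) q ↔ (q : ℝ≥0∞) = ⨆ i, (y i : ℝ≥0∞) := by
  have key : ∀ b : ℝ≥0, (⨆ i, (y i : ℝ≥0∞)) ≤ b ↔ b ∈ upperBounds (Set.range y) := by
    simp [mem_upperBounds]
  have of_eq : ∀ t : ℝ≥0, (t : ℝ≥0∞) = ⨆ i, (y i : ℝ≥0∞) → IsLUB (Set.range y) t :=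
    fun t ht => isLUB_iff_le_iff.2 fun b => by rw [← ENNReal.coe_le_coe, ht, key]
  refine ⟨fun h => ?_, of_eq q⟩
  have hlt : (⨆ i, (y i : ℝ≥0∞)) ≠ ⊤ := ne_top_of_le_ne_top ENNReal.coe_ne_top ((key q).2 h.1)
  rw [h.unique (of_eq _ (ENNReal.coe_toNNReal hlt)), ENNReal.coe_toNNReal hlt]

lemma isLUB_range_iff_coe_eq_iSup {ι α : Type*} (x : ι → α → ℝ≥0) (p : α → ℝ≥0) :
    IsLUB (Set.range x) p ↔ ∀ a, (p a : ℝ≥0∞) = ⨆ i, (x i a : ℝ≥0∞) := by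
  rw [isLUB_pi]
  refine forall_congr' fun a => ?_
  rw [← Set.range_comp', NNReal.isLUB_range_iff_coe_eq_iSup]

noncomputable def evalSeq (m : MDist) (j : ℕ) : MDist :=
  (fun m => (FullLift.exists_eStep m).choose)^[j] m

lemma isEvalSeq_evalSeq (m : MDist) : IsEvalSeq (evalSeq m) := fun i => by
  simp only [evalSeq, Function.iterate_succ_apply']
  exact (FullLift.exists_eStep _).choose_spec

/-- `⟦m⟧`, computed along one chosen evaluation sequence. -/
noncomputable def evalLimit (m : MDist) (N : PTm) : ℝ≥0 := (limObs (evalSeq m) N).toNNReal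

lemma IsEvalSeq.limObs_eq {f : ℕ → MDist} (hf : IsEvalSeq f) (N : PTm) :
    limObs f N = limObs (evalSeq (f 0)) N :=
  le_antisymm (iSup_le fun j => (isEvalSeq_evalSeq (f 0)).obsN_le_limObs (hf.reach j) N)
    (iSup_le fun j => hf.obsN_le_limObs ((isEvalSeq_evalSeq (f 0)).reach j) N)

lemma coe_evalLimit (m : MDist) (N : PTm) : (evalLimit m N : ℝ≥0∞) = limObs (evalSeq m) N := by
  refine ENNReal.coe_toNNReal (ne_top_of_le_ne_top (ENNReal.coe_ne_top (r := mass m)) ?_)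
  refine iSup_le fun j => ?_
  have : mass (evalSeq m j) = mass m := mass_eq_of_reach ((isEvalSeq_evalSeq m).reach j)
  exact_mod_cast this ▸ obsN_le_mass _ N

lemma IsEvalSeq.isLUB_evalLimit {f : ℕ → MDist} (hf : IsEvalSeq f) :
    IsLUB (Set.range fun i => obsN (f i)) (evalLimit (f 0)) :=
  (isLUB_range_iff_coe_eq_iSup _ _).2 fun N => by rw [coe_evalLimit, ← hf.limObs_eq]; rfl

lemma obsN_le_evalLimit {m n : MDist} (hn : Relation.ReflTransGen (Lift Step) m n) :
    obsN n ≤ evalLimit m := fun N => by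
  rw [← ENNReal.coe_le_coe, coe_evalLimit]
  exact (isEvalSeq_evalSeq m).obsN_le_limObs hn N

lemma MSeq.reach {m : MDist} {f : ℕ → MDist} (hf : MSeq (Lift Step) m f) (j : ℕ) :
    Relation.ReflTransGen (Lift Step) m (f j) := by
  induction j with
  | zero => rw [hf.1]
  | succ j ih =>
    rcases hf.2 j with h | ⟨_, h⟩
    · exact ih.tail h
    · rwa [h]

lemma MSeq.isEvalSeq {m : MDist} {f : ℕ → MDist} (hf : MSeq (FullLift EStep) m f) :
    IsEvalSeq f := fun i =>
  (hf.2 i).resolve_right fun ⟨hnorm, _⟩ => hnorm _ (FullLift.exists_eStep _).choose_spec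

theorem prob_cbv_asymptotic_normalization_general (m : MDist) :
    ∃ g : PTm → NNReal,
      IsGreatest {p | MConv (Lift Step) m p} g ∧
      (∀ p, MConv (FullLift EStep) m p ↔ p = g) ∧
      (∀ f, MSeq (FullLift EStep) m f → IsLUB (Set.range fun i => obsN (f i)) g) := by
  have hE := isEvalSeq_evalSeq m
  have hlim : ∀ f, MSeq (FullLift EStep) m f →
      IsLUB (Set.range fun i => obsN (f i)) (evalLimit m) :=
    fun f hf => hf.1 ▸ hf.isEvalSeq.isLUB_evalLimit
  refine ⟨evalLimit m, ⟨?_, ?_⟩, fun p => ⟨?_, ?_⟩, hlim⟩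
  · exact ⟨evalSeq m, ⟨rfl, fun i => .inl (hE.liftStep i)⟩, hE.isLUB_evalLimit⟩
  · rintro p ⟨f, hf, hlub⟩
    exact hlub.2 <| Set.forall_mem_range.2 fun i => obsN_le_evalLimit (hf.reach i)
  · rintro ⟨f, hf, hlub⟩
    exact hlub.unique (hlim f hf)
  · rintro rfl
    exact ⟨evalSeq m, ⟨rfl, fun i => .inl (hE i)⟩, hE.isLUB_evalLimit⟩

/-- **Asymptotic normalization for the probabilistic Call-by-Value λ-calculus**:
for every multi-distribution `m`, the set `Lim(m, ⇒)` of limits of `⇒`-sequences from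
`m` has a greatest element `⟦m⟧`; `m ⇉E⇓ p` iff `p = ⟦m⟧`; in particular every
`⇉E`-sequence from `m` has limit `⟦m⟧`, i.e. the full unbiased evaluation `⇉E` is an
asymptotically normalizing strategy for `⇒` with respect to `obsN`. -/
theorem prob_cbv_asymptotic_normalization (m : MDist) (hm : IsMDist m) :
    ∃ g : PTm → NNReal,
      IsGreatest {p | MConv (Lift Step) m p} g ∧
      (∀ p, MConv (FullLift EStep) m p ↔ p = g) ∧
      (∀ f, MSeq (FullLift EStep) m f → IsLUB (Set.range fun i => obsN (f i)) g) :=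
  prob_cbv_asymptotic_normalization_general m
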